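/- arXiv:2010.05728 — 2 statements merged into one kernel-verified Lean document; each statement's English description precedes it below -/
import Mathlib

section
/- With g and I as above, define t(m) = (-1)^m e^{-mπ/ρ} for nonnegative integers m. Then for every m ≥ 1 and every θ ∈ I, t(m)·g(θ) lies in g(I), so θ*(θ, m) := g^{-1}(t(m) g(θ)) is well defined; moreover θ*(0, m) = 0, |θ*(θ, m)| ≤ |θ| for all θ ∈ I (with the convention for the boundary case m = 1, θ = -π + p* where equality holds), and θ*(p*, m) = θ*(-π + p*, m + 1) for all m ≥ 0 (with θ*(θ, 0) := θ). -/
open Real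

set_option maxHeartbeats 1000000 in
/-- With `g(θ) = e^{-θ/ρ} sin θ` strictly increasing on `I = [-π + p*, p*]` and
`t(m) = (-1)^m e^{-mπ/ρ}`: for `m ≥ 1` and `θ ∈ I`, `t(m) g(θ)` lies in `g(I)`, so
`θ*(θ, m) = g⁻¹(t(m) g(θ))` is well defined; moreover `θ*(0, m) = 0`,
`|θ*(θ, m)| ≤ |θ|`, and the matching condition `θ*(p*, m) = θ*(-π + p*, m + 1)`
holds for all `m ≥ 0` (with `θ*(θ, 0) = θ`). -/
theorem stmt12 (ρ : ℝ) (hρ : 0 < ρ)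
    (g : ℝ → ℝ) (hg : g = fun θ => Real.exp (-θ / ρ) * Real.sin θ)
    (p : ℝ) (hp : p = Real.arctan ρ)
    (t : ℕ → ℝ) (ht : t = fun (m : ℕ) => (-1 : ℝ) ^ m * Real.exp (-(m : ℝ) * π / ρ)) :
    (∀ m : ℕ, 1 ≤ m → ∀ θ ∈ Set.Icc (-π + p) p,
      t m * g θ ∈ g '' Set.Icc (-π + p) p) ∧
    ∃ θstar : ℝ → ℕ → ℝ,
      (∀ θ ∈ Set.Icc (-π + p) p, θstar θ 0 = θ) ∧
      (∀ m : ℕ, 1 ≤ m → ∀ θ ∈ Set.Icc (-π + p) p,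
        θstar θ m ∈ Set.Icc (-π + p) p ∧
        g (θstar θ m) = t m * g θ ∧
        |θstar θ m| ≤ |θ|) ∧
      (∀ m : ℕ, 1 ≤ m → θstar 0 m = 0) ∧
      (∀ m : ℕ, θstar p m = θstar (-π + p) (m + 1)) := by
  have hπ : (0:ℝ) < π := Real.pi_pos
  have hp0 : 0 < p := by
    rw [hp, ← Real.arctan_zero]; exact Real.arctan_strictMono hρ
  have hp2 : p < π / 2 := by rw [hp]; exact Real.arctan_lt_pi_div_two ρ
  set a : ℝ := -π + p with ha
  have hab : a < p := by simp only [ha]; linarith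
  have ha0 : a ≤ 0 := by simp only [ha]; linarith
  set I : Set ℝ := Set.Icc a p with hI
  have h0I : (0:ℝ) ∈ I := ⟨ha0, hp0.le⟩
  have haI : a ∈ I := ⟨le_rfl, hab.le⟩
  have hpI : p ∈ I := ⟨hab.le, le_rfl⟩
  have hgc : Continuous g := by rw [hg]; continuity
  have hgx_def : ∀ z, g z = Real.exp (-z/ρ) * Real.sin z := fun z => by simp only [hg]
  -- sin and cos of p
  have hsqrt : (0:ℝ) < Real.sqrt (1 + ρ^2) := by positivity
  have hsinp : Real.sin p = ρ / Real.sqrt (1 + ρ^2) := by rw [hp, Real.sin_arctan]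
  have hcosp : Real.cos p = 1 / Real.sqrt (1 + ρ^2) := by rw [hp, Real.cos_arctan]
  -- derivative of g
  have hder : ∀ x : ℝ, HasDerivAt g
      (Real.exp (-x/ρ) * (-1/ρ) * Real.sin x + Real.exp (-x/ρ) * Real.cos x) x := by
    intro x
    rw [hg]
    have h1 : HasDerivAt (fun y : ℝ => -y/ρ) (-1/ρ) x := by
      simpa using ((hasDerivAt_id x).neg.div_const ρ)
    exact h1.exp.mul (Real.hasDerivAt_sin x)
  -- strict monotonicity
  have hmono : StrictMonoOn g I := by
    apply strictMonoOn_of_deriv_pos (convex_Icc a p) hgc.continuousOn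
    intro x hx
    rw [interior_Icc] at hx
    have hx1 : -π + p < x := ha ▸ hx.1
    rw [(hder x).deriv]
    have hsp : 0 < Real.sin (p - x) :=
      Real.sin_pos_of_pos_of_lt_pi (by linarith [hx.2]) (by linarith)
    have hkey2 : ρ * Real.cos x - Real.sin x = Real.sqrt (1+ρ^2) * Real.sin (p - x) := by
      rw [Real.sin_sub, hsinp, hcosp]
      field_simp
    have h2 : 0 < ρ * Real.cos x - Real.sin x := by rw [hkey2]; positivity
    have h3 : Real.exp (-x/ρ) * (-1/ρ) * Real.sin x + Real.exp (-x/ρ) * Real.cos x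
        = Real.exp (-x/ρ) / ρ * (ρ * Real.cos x - Real.sin x) := by
      field_simp
      ring
    rw [h3]
    exact mul_pos (div_pos (Real.exp_pos _) hρ) h2
  have hinj : Set.InjOn g I := hmono.injOn
  -- sign facts for sin on I
  have hsin_pos : ∀ y ∈ I, 0 < y → 0 < Real.sin y := by
    intro y hy h
    exact Real.sin_pos_of_pos_of_lt_pi h (by have := hy.2; linarith)
  have hsin_neg : ∀ y ∈ I, y ≤ 0 → Real.sin y ≤ 0 := by
    intro y hy h
    have hy1 : -π + p ≤ y := ha ▸ hy.1
    have h2 : 0 ≤ Real.sin (-y) :=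
      Real.sin_nonneg_of_nonneg_of_le_pi (by linarith) (by linarith)
    rw [Real.sin_neg] at h2; linarith
  have hexp_le_one : Real.exp (-π/ρ) ≤ 1 := by
    rw [← Real.exp_zero]
    apply Real.exp_le_exp.mpr
    have h0 : 0 ≤ π/ρ := by positivity
    have : -π/ρ = -(π/ρ) := by ring
    linarith [this ▸ (neg_nonpos.mpr h0)]
  -- the key comparison lemma
  have hkey : ∀ x ∈ I, ∀ y ∈ I, |g x| ≤ Real.exp (-π/ρ) * |g y| → |x| ≤ |y| := by
    intro x hx y hy hle
    have hx1 : -π + p ≤ x := ha ▸ hx.1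
    have hy1 : -π + p ≤ y := ha ▸ hy.1
    rcases lt_or_ge 0 x with hx0 | hx0 <;> rcases lt_or_ge 0 y with hy0 | hy0
    · -- x > 0, y > 0
      have hsx := hsin_pos x hx hx0
      have hsy := hsin_pos y hy hy0
      have hgx : 0 < g x := by rw [hgx_def]; positivity
      have hgy : 0 < g y := by rw [hgx_def]; positivity
      have h2 : g x ≤ g y := by
        rw [abs_of_pos hgx, abs_of_pos hgy] at hle
        nlinarith [Real.exp_pos (-π/ρ)]
      rw [abs_of_pos hx0, abs_of_pos hy0]
      exact (hmono.le_iff_le hx hy).mp h2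
    · -- x > 0, y ≤ 0
      by_contra hcon
      push_neg at hcon
      rw [abs_of_pos hx0, abs_of_nonpos hy0] at hcon
      have hsy : Real.sin y ≤ 0 := hsin_neg y hy hy0
      have hsx := hsin_pos x hx hx0
      have hmy : Real.sin (-y) < Real.sin x :=
        Real.strictMonoOn_sin ⟨by linarith, by linarith [hx.2]⟩
          ⟨by linarith, by linarith [hx.2]⟩ hcon
      have hexp : Real.exp ((-π + -y)/ρ) ≤ Real.exp (-x/ρ) := by
        apply Real.exp_le_exp.mpr
        apply (div_le_div_iff_of_pos_right hρ).mpr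
        have := hx.2
        linarith [hp2]
      have e1 : |g y| = Real.exp (-y/ρ) * Real.sin (-y) := by
        rw [hgx_def, abs_mul, abs_of_pos (Real.exp_pos _), abs_of_nonpos hsy, Real.sin_neg]
      have e2 : |g x| = Real.exp (-x/ρ) * Real.sin x := by
        rw [hgx_def, abs_mul, abs_of_pos (Real.exp_pos _), abs_of_pos hsx]
      rw [e1, e2, ← mul_assoc, ← Real.exp_add] at hle
      rw [show -π/ρ + -y/ρ = (-π + -y)/ρ by ring] at hle
      have h8 : 0 ≤ Real.sin (-y) := by rw [Real.sin_neg]; linarith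
      have c1 := mul_le_mul_of_nonneg_right hexp h8
      have c2 := mul_lt_mul_of_pos_left hmy (Real.exp_pos (-x/ρ))
      linarith
    · -- x ≤ 0, y > 0
      by_contra hcon
      push_neg at hcon
      rw [abs_of_nonpos hx0, abs_of_pos hy0] at hcon
      have hsy := hsin_pos y hy hy0
      have hsx : Real.sin x ≤ 0 := hsin_neg x hx hx0
      have hss : Real.sin y ≤ Real.sin (-x) := by
        rcases le_or_gt (-x) (π/2) with h | h
        · exact Real.strictMonoOn_sin.monotoneOn
            ⟨by linarith, by linarith [hy.2]⟩ ⟨by linarith, h⟩ hcon.le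
        · have h9 : Real.sin (-x) = Real.sin (π + x) := by
            rw [show π + x = π - (-x) by ring, Real.sin_pi_sub]
          rw [h9]
          exact Real.strictMonoOn_sin.monotoneOn
            ⟨by linarith, by linarith [hy.2]⟩
            ⟨by linarith, by linarith⟩ (by linarith [hy.2])
      have hexp : Real.exp ((-π + -y)/ρ) < Real.exp (-x/ρ) := by
        apply Real.exp_lt_exp.mpr
        apply (div_lt_div_iff_of_pos_right hρ).mpr
        linarith
      have e1 : |g y| = Real.exp (-y/ρ) * Real.sin y := by
        rw [hgx_def, abs_mul, abs_of_pos (Real.exp_pos _), abs_of_pos hsy]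
      have e2 : |g x| = Real.exp (-x/ρ) * Real.sin (-x) := by
        rw [hgx_def, abs_mul, abs_of_pos (Real.exp_pos _), abs_of_nonpos hsx, Real.sin_neg]
      rw [e1, e2, ← mul_assoc, ← Real.exp_add] at hle
      rw [show -π/ρ + -y/ρ = (-π + -y)/ρ by ring] at hle
      have c1 := mul_lt_mul_of_pos_right hexp hsy
      have c2 := mul_le_mul_of_nonneg_left hss (Real.exp_pos (-x/ρ)).le
      linarith
    · -- x ≤ 0, y ≤ 0
      have hsx : Real.sin x ≤ 0 := hsin_neg x hx hx0
      have hsy : Real.sin y ≤ 0 := hsin_neg y hy hy0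
      have hgx : g x ≤ 0 := by
        rw [hgx_def]
        exact mul_nonpos_iff.mpr (Or.inl ⟨(Real.exp_pos _).le, hsx⟩)
      have hgy : g y ≤ 0 := by
        rw [hgx_def]
        exact mul_nonpos_iff.mpr (Or.inl ⟨(Real.exp_pos _).le, hsy⟩)
      rw [abs_of_nonpos hgx, abs_of_nonpos hgy] at hle
      have h2 : g y ≤ g x := by nlinarith [Real.exp_pos (-π/ρ)]
      rw [abs_of_nonpos hx0, abs_of_nonpos hy0]
      have := (hmono.le_iff_le hy hx).mp h2
      linarith
  -- endpoint values
  have hgp_pos : 0 < g p := by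
    rw [hgx_def]
    have := hsin_pos p hpI hp0
    positivity
  have hga : g a = -(Real.exp (π/ρ) * g p) := by
    rw [hgx_def, hgx_def]
    have h1 : Real.sin a = -Real.sin p := by
      rw [ha, show -π + p = p - π by ring, Real.sin_sub_pi]
    rw [h1, show -a/ρ = π/ρ + -p/ρ by rw [ha]; ring, Real.exp_add]
    ring
  -- image of I under g
  have himg : g '' I = Set.Icc (g a) (g p) := by
    apply Set.Subset.antisymm
    · rintro z ⟨x, hx, rfl⟩
      exact ⟨hmono.monotoneOn haI hx hx.1, hmono.monotoneOn hx hpI hx.2⟩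
    · exact intermediate_value_Icc hab.le hgc.continuousOn
  have hexp1 : 1 ≤ Real.exp (π/ρ) := by
    rw [← Real.exp_zero]
    exact Real.exp_le_exp.mpr (by positivity)
  have habs : ∀ θ ∈ I, |g θ| ≤ Real.exp (π/ρ) * g p := by
    intro θ hθ
    rw [abs_le]
    constructor
    · have := hmono.monotoneOn haI hθ hθ.1
      rw [hga] at this; linarith
    · have := hmono.monotoneOn hθ hpI hθ.2
      nlinarith
  have htabs : ∀ m : ℕ, |t m| = Real.exp (-(m:ℝ) * π / ρ) := by
    intro m
    simp [ht, abs_mul, abs_pow, abs_of_pos (Real.exp_pos _)]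
  have htle : ∀ m : ℕ, 1 ≤ m → Real.exp (-(m:ℝ)*π/ρ) ≤ Real.exp (-π/ρ) := by
    intro m hm
    apply Real.exp_le_exp.mpr
    have h1 : (1:ℝ) ≤ m := by exact_mod_cast hm
    have h2 : π/ρ ≤ (m:ℝ)*π/ρ := by
      apply (div_le_div_iff_of_pos_right hρ).mpr
      nlinarith [mul_le_mul_of_nonneg_right h1 hπ.le]
    have h3 : -(m:ℝ)*π/ρ = -((m:ℝ)*π/ρ) := by ring
    have h4 : -π/ρ = -(π/ρ) := by ring
    rw [h3, h4]; linarith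
  -- containment
  have hcont : ∀ m : ℕ, 1 ≤ m → ∀ θ ∈ I, t m * g θ ∈ g '' I := by
    intro m hm θ hθ
    rw [himg]
    have h1 : |t m * g θ| ≤ g p := by
      rw [abs_mul, htabs]
      calc Real.exp (-(m:ℝ)*π/ρ) * |g θ|
          ≤ Real.exp (-π/ρ) * (Real.exp (π/ρ) * g p) :=
            mul_le_mul (htle m hm) (habs θ hθ) (abs_nonneg _) (Real.exp_pos _).le
        _ = g p := by
            rw [← mul_assoc, ← Real.exp_add,
              show -π/ρ + π/ρ = 0 by ring, Real.exp_zero, one_mul]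
    have h2 := abs_le.mp h1
    constructor
    · rw [hga]; nlinarith
    · exact h2.2
  -- choose the inverse function
  have hex : ∀ (θ : ℝ) (m : ℕ), ∃ x : ℝ,
      ((1 ≤ m ∧ θ ∈ I) → x ∈ I ∧ g x = t m * g θ) ∧ (¬(1 ≤ m ∧ θ ∈ I) → x = θ) := by
    intro θ m
    by_cases h : 1 ≤ m ∧ θ ∈ I
    · obtain ⟨x, hxI, hgx⟩ := hcont m h.1 θ h.2
      exact ⟨x, fun _ => ⟨hxI, hgx⟩, fun h' => absurd h h'⟩
    · exact ⟨θ, fun h' => absurd h' h, fun _ => rfl⟩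
  choose θs hs1 hs2 using hex
  have hg0 : g 0 = 0 := by rw [hgx_def]; simp
  refine ⟨hcont, θs, ?_, ?_, ?_, ?_⟩
  · intro θ _
    exact hs2 θ 0 (by simp)
  · intro m hm θ hθ
    obtain ⟨hxI, hgx⟩ := hs1 θ m ⟨hm, hθ⟩
    refine ⟨hxI, hgx, ?_⟩
    apply hkey _ hxI _ hθ
    rw [hgx, abs_mul, htabs]
    exact mul_le_mul_of_nonneg_right (htle m hm) (abs_nonneg _)
  · intro m hm
    obtain ⟨hxI, hgx⟩ := hs1 0 m ⟨hm, h0I⟩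
    apply hinj hxI h0I
    rw [hgx, hg0, mul_zero]
  · intro m
    obtain ⟨hyI, hgy⟩ := hs1 a (m+1) ⟨Nat.le_add_left 1 m, haI⟩
    have hx : θs p m ∈ I ∧ g (θs p m) = t m * g p := by
      rcases Nat.eq_zero_or_pos m with h0 | h1
      · subst h0
        rw [hs2 p 0 (by simp)]
        exact ⟨hpI, by simp [ht]⟩
      · exact hs1 p m ⟨h1, hpI⟩
    apply hinj hx.1 hyI
    rw [hx.2, hgy, hga]
    simp only [ht]
    rw [pow_succ]
    have h5 : Real.exp (-((m:ℕ)+1:ℕ) * π / ρ) * Real.exp (π/ρ)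
        = Real.exp (-(m:ℝ) * π / ρ) := by
      rw [← Real.exp_add]
      congr 1
      push_cast
      field_simp
      ring
    rw [← h5]
    push_cast
    ring
end

section
/- For m ≥ 2 and θ ∈ I = [-π + p*, p*], the function θ*(θ, m) = g^{-1}(t(m)g(θ)) satisfies the uniform bound |θ*(θ, m)| ≤ C e^{-mπ/ρ} for a constant C depending only on ρ. -/
open Real

/-!
Write `ψ = θ*(θ, m)`. On `I` the factor `e^{-ψ/ρ}` is at least `e^{-p/ρ}`, and `|ψ| ≤ π - p`,
where concavity of `sin` on `[0, π]` gives the chord bound `|sin ψ| ≥ (sin p / (π - p)) |ψ|`.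
Hence `|g ψ| ≥ c |ψ|` with `c > 0` depending only on `ρ`, while
`|g ψ| = e^{-mπ/ρ} |g θ| ≤ e^{-mπ/ρ} e^{(π - p)/ρ}`.
-/

lemma sin_div_mul_le_sin {q x : ℝ} (hq : 0 < q) (hqπ : q ≤ π) (hx : 0 ≤ x) (hxq : x ≤ q) :
    sin q / q * x ≤ sin x := by
  have hconc := strictConcaveOn_sin_Icc.concaveOn.2
    (⟨le_rfl, pi_pos.le⟩ : (0 : ℝ) ∈ Set.Icc 0 π) ⟨hq.le, hqπ⟩
    (sub_nonneg.2 ((div_le_one hq).2 hxq)) (div_nonneg hx hq.le) (by ring)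
  have hxq' : x / q * q = x := div_mul_cancel₀ x hq.ne'
  calc sin q / q * x = x * sin q / q := by ring
    _ ≤ sin x := by simpa [hxq', div_mul_eq_mul_div, mul_comm] using hconc

lemma sin_div_mul_abs_le_abs_sin {q x : ℝ} (hq : 0 < q) (hqπ : q ≤ π) (hxq : |x| ≤ q) :
    sin q / q * |x| ≤ |sin x| := by
  rw [abs_sin_eq_sin_abs_of_abs_le_pi (hxq.trans hqπ)]
  exact sin_div_mul_le_sin hq hqπ (abs_nonneg x) hxq

section DampedSine

variable {ρ p : ℝ}

lemma mul_abs_le_abs_exp_mul_sin (hρ : 0 < ρ) (hp0 : 0 ≤ p) (hp : p ≤ π / 2) {ψ : ℝ}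
    (hψ : ψ ∈ Set.Icc (-π + p) p) :
    sin p / (π - p) * exp (-p / ρ) * |ψ| ≤ |exp (-ψ / ρ) * sin ψ| := by
  have hπp : 0 < π - p := by linarith [pi_pos]
  have hchord := sin_div_mul_abs_le_abs_sin (x := ψ) hπp (by linarith)
    (abs_le.2 ⟨by linarith [hψ.1], by linarith [hψ.2]⟩)
  rw [sin_pi_sub] at hchord
  have hexp : exp (-p / ρ) ≤ exp (-ψ / ρ) := by
    gcongr
    exact hψ.2
  rw [abs_mul, abs_exp]
  calc sin p / (π - p) * exp (-p / ρ) * |ψ| = sin p / (π - p) * |ψ| * exp (-p / ρ) := by ring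
    _ ≤ |sin ψ| * exp (-ψ / ρ) := mul_le_mul hchord hexp (exp_pos _).le (abs_nonneg _)
    _ = exp (-ψ / ρ) * |sin ψ| := mul_comm _ _

lemma abs_exp_mul_sin_le (hρ : 0 < ρ) {θ : ℝ} (hθ : -π + p ≤ θ) :
    |exp (-θ / ρ) * sin θ| ≤ exp ((π - p) / ρ) := by
  rw [abs_mul, abs_exp]
  calc exp (-θ / ρ) * |sin θ| ≤ exp (-θ / ρ) :=
      mul_le_of_le_one_right (exp_pos _).le (abs_sin_le_one θ)
    _ ≤ exp ((π - p) / ρ) := by gcongr; linarith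

end DampedSine

/-- For `m ≥ 2` and `θ ∈ I`, the function `θ*(θ, m)` (characterized by `θ*(θ,m) ∈ I` and
`g(θ*(θ, m)) = t(m) g(θ)`) satisfies the uniform bound `|θ*(θ, m)| ≤ C e^{-mπ/ρ}` for a
constant `C` depending only on `ρ`. -/
theorem stmt14 (ρ : ℝ) (hρ : 0 < ρ)
    (g : ℝ → ℝ) (hg : g = fun θ => Real.exp (-θ / ρ) * Real.sin θ)
    (p : ℝ) (hp : p = Real.arctan ρ)
    (t : ℕ → ℝ) (ht : t = fun (m : ℕ) => (-1 : ℝ) ^ m * Real.exp (-(m : ℝ) * π / ρ))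
    (θstar : ℝ → ℕ → ℝ)
    (hθ : ∀ θ ∈ Set.Icc (-π + p) p, ∀ m : ℕ, 2 ≤ m →
      θstar θ m ∈ Set.Icc (-π + p) p ∧ g (θstar θ m) = t m * g θ) :
    ∃ C : ℝ, 0 < C ∧ ∀ θ ∈ Set.Icc (-π + p) p, ∀ m : ℕ, 2 ≤ m →
      |θstar θ m| ≤ C * Real.exp (-(m : ℝ) * π / ρ) := by
  subst hg ht
  have hp2 : p ≤ π / 2 := hp ▸ (arctan_lt_pi_div_two ρ).le
  have hp0 : 0 < p := hp ▸ arctan_pos.2 hρ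
  have hsp : 0 < sin p := sin_pos_of_pos_of_lt_pi hp0 (by linarith [pi_pos])
  have hc : 0 < sin p / (π - p) * exp (-p / ρ) := by
    have : 0 < π - p := by linarith [pi_pos]
    positivity
  refine ⟨exp ((π - p) / ρ) / (sin p / (π - p) * exp (-p / ρ)), by positivity, ?_⟩
  intro θ hθI m hm
  obtain ⟨hmem, heq⟩ := hθ θ hθI m hm
  beta_reduce at heq
  have key : sin p / (π - p) * exp (-p / ρ) * |θstar θ m|
      ≤ exp (-(m : ℝ) * π / ρ) * exp ((π - p) / ρ) :=
    calc _ ≤ |exp (-θstar θ m / ρ) * sin (θstar θ m)| :=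
          mul_abs_le_abs_exp_mul_sin hρ hp0.le hp2 hmem
      _ = exp (-(m : ℝ) * π / ρ) * |exp (-θ / ρ) * sin θ| := by
        rw [heq, abs_mul, abs_mul, abs_pow, abs_neg, abs_one, one_pow, one_mul, abs_exp]
      _ ≤ _ := by gcongr; exact abs_exp_mul_sin_le hρ hθI.1
  rw [div_mul_eq_mul_div, le_div_iff₀ hc]
  linarith
end
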